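/- A unit vector |ψ⟩ ∈ ℂ^d achieves equality M_α(ψ) = (1/(1−α)) log[(1 + (d−1)(d+1)^{1−α})/d] for some (equivalently, every) α ≥ 2 if and only if |⟨ψ|D_a|ψ⟩|² = 1/(d+1) for all a ≠ 0, i.e., |ψ⟩ is a fiducial vector of a Weyl-Heisenberg covariant SIC. -/

import Mathlib

/-!
For a fixed shift `m`, the map `n ↦ ⟨ψ|D_(m,n)|ψ⟩` is, up to a phase, the discrete Fourier
transform of `k ↦ conj ψ(k+m) ψ(k)`. Parseval's identity then gives `∑_a |⟨ψ|D_a|ψ⟩|² = d`, and the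
`a = 0` term is `1`. So the `d² - 1` numbers `p_a = |⟨ψ|D_a|ψ⟩|²`, `a ≠ 0`, are nonnegative with sum
`d - 1`, and by strict convexity of `x ↦ x ^ α` the sum `∑_{a ≠ 0} p_a ^ α` equals
`(d² - 1) (d + 1) ^ (-α)` exactly when every `p_a` is the mean `1 / (d + 1)`. Since
`M_α(ψ) = (1 / (1 - α)) log ((1 + ∑_{a ≠ 0} p_a ^ α) / d)`, this is the claimed equality case.
-/

open scoped BigOperators Kronecker
open Matrix

noncomputable section

/-- The primitive `d`-th root of unity `ω = e^{2πi/d}`. -/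
def omega (d : ℕ) : ℂ := Complex.exp (2 * Real.pi * Complex.I / d)

/-- A fixed square root of `ω`: `τ = e^{πi/d}`, so `τ ^ 2 = ω`. -/
def tau (d : ℕ) : ℂ := Complex.exp (Real.pi * Complex.I / d)

/-- Weyl–Heisenberg displacement operator `D_a = ω^{a₁a₂/2} X^{a₁} Z^{a₂}` on `ℂ^d`,
where `X |k⟩ = |k+1⟩` is the shift and `Z |k⟩ = ω^k |k⟩` is the clock (arithmetic mod `d`). -/
def Disp (d : ℕ) (a : ℤ × ℤ) : Matrix (ZMod d) (ZMod d) ℂ := fun j k =>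
  tau d ^ (a.1 * a.2) * omega d ^ (a.2 * (k.val : ℤ)) * (if j = k + (a.1 : ZMod d) then 1 else 0)

/-- Rank-one projector `|v⟩⟨v|`. -/
def proj {n : Type*} (v : n → ℂ) : Matrix n n ℂ := Matrix.vecMulVec v (star v)

/-- Stabilizer entropy of order `α` of a state `ρ` on `ℂ^d`. -/
def stabEntropy (d : ℕ) [NeZero d] (α : ℝ) (ρ : Matrix (ZMod d) (ZMod d) ℂ) : ℝ :=
  (1 / (1 - α)) * Real.log (∑ a : ZMod d × ZMod d,
      ((1 / d) * ‖(Disp d ((a.1.val : ℤ), (a.2.val : ℤ)) * ρ).trace‖ ^ 2) ^ α)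
    - Real.log d

theorem AddChar.IsPrimitive.sum_sq_norm_sum_mul {R : Type*} [CommRing R] [Fintype R]
    {ψ : AddChar R ℂ} (hψ : ψ.IsPrimitive) (f : R → ℂ) :
    ∑ n, ‖∑ k, ψ (n * k) * f k‖ ^ 2 = Fintype.card R * ∑ k, ‖f k‖ ^ 2 := by
  classical
  have orthogonality (k k' : R) :
      ∑ n, ψ (n * k) * f k * (starRingEnd ℂ (ψ (n * k')) * starRingEnd ℂ (f k')) =
        if k = k' then Fintype.card R * (f k * starRingEnd ℂ (f k')) else 0 := by
    have : ∑ n, ψ (n * k) * starRingEnd ℂ (ψ (n * k')) =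
        if k = k' then (Fintype.card R : ℂ) else 0 := by
      simp_rw [← AddChar.map_neg_eq_conj, ← AddChar.map_add_eq_mul, ← mul_neg, ← mul_add,
        ← sub_eq_add_neg, AddChar.sum_mulShift _ hψ, sub_eq_zero]
      push_cast; rfl
    rw [← zero_mul (f k * starRingEnd ℂ (f k')), ← ite_mul, ← this, Finset.sum_mul]
    exact Finset.sum_congr rfl fun n _ => by ring
  apply Complex.ofReal_injective
  push_cast
  simp_rw [← Complex.mul_conj', map_sum, map_mul, Finset.sum_mul_sum, Finset.mul_sum]
  rw [Finset.sum_comm]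
  refine Finset.sum_congr rfl fun k _ => ?_
  rw [Finset.sum_comm]
  simp_rw [orthogonality, Finset.sum_ite_eq, Finset.mem_univ, if_true]

theorem sum_rpow_eq_card_mul_rpow_iff {ι : Type*} {t : Finset ι} {x : ι → ℝ} {c α : ℝ}
    (hα : 1 < α) (hx : ∀ i ∈ t, 0 ≤ x i) (hsum : ∑ i ∈ t, x i = t.card * c) :
    ∑ i ∈ t, x i ^ α = t.card * c ^ α ↔ ∀ i ∈ t, x i = c := by
  rcases t.eq_empty_or_nonempty with rfl | ht
  · simp
  have hcard : (0 : ℝ) < t.card := by exact_mod_cast ht.card_pos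
  have hmean : ∑ i ∈ t, (t.card : ℝ)⁻¹ • x i = c := by
    rw [← Finset.smul_sum, hsum, smul_eq_mul, inv_mul_cancel_left₀ hcard.ne']
  have hweights : ∑ _i ∈ t, (t.card : ℝ)⁻¹ = 1 := by
    rw [Finset.sum_const, nsmul_eq_mul, mul_inv_cancel₀ hcard.ne']
  have jensen := (strictConvexOn_rpow hα).map_sum_eq_iff (fun _ _ => inv_pos.2 hcard) hweights hx
  rwa [hmean, ← Finset.smul_sum, smul_eq_mul, eq_inv_mul_iff_mul_eq₀ hcard.ne', eq_comm]
    at jensen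

theorem trace_mul_proj {n : Type*} [Fintype n] (M : Matrix n n ℂ) (v : n → ℂ) :
    (M * proj v).trace = star v ⬝ᵥ M *ᵥ v := by
  rw [proj, mul_vecMulVec, trace_vecMulVec, dotProduct_comm]

theorem omega_zpow_eq_stdAddChar (d : ℕ) [NeZero d] (j : ℤ) :
    omega d ^ j = ZMod.stdAddChar (j : ZMod d) := by
  rw [ZMod.stdAddChar_coe, omega, ← Complex.exp_int_mul]
  ring_nf

theorem norm_tau (d : ℕ) : ‖tau d‖ = 1 := by
  simp [tau, Complex.norm_exp]

def dispExpectSq (d : ℕ) [NeZero d] (ψ : ZMod d → ℂ) (a : ZMod d × ZMod d) : ℝ :=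
  ‖star ψ ⬝ᵥ (Disp d (a.1.val, a.2.val)).mulVec ψ‖ ^ 2

section
variable {d : ℕ} [NeZero d]

theorem dotProduct_disp_mulVec (ψ : ZMod d → ℂ) (m n : ℤ) :
    star ψ ⬝ᵥ (Disp d (m, n)).mulVec ψ =
      tau d ^ (m * n) *
        ∑ k, ZMod.stdAddChar ((n : ZMod d) * k) * (starRingEnd ℂ (ψ (k + m)) * ψ k) := by
  simp only [dotProduct, Matrix.mulVec, Disp, Pi.star_apply, RCLike.star_def, Finset.mul_sum]
  rw [Finset.sum_comm]
  refine Finset.sum_congr rfl fun k _ => ?_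
  rw [Finset.sum_eq_single (k + (m : ZMod d)), omega_zpow_eq_stdAddChar]
  · push_cast [ZMod.natCast_val, ZMod.cast_id]
    simp only [if_true]
    ring
  · intro j _ hj; simp [hj]
  · simp

theorem dispExpectSq_nonneg (ψ : ZMod d → ℂ) (a : ZMod d × ZMod d) :
    0 ≤ dispExpectSq d ψ a :=
  sq_nonneg _

theorem dispExpectSq_eq (ψ : ZMod d → ℂ) (a : ZMod d × ZMod d) :
    dispExpectSq d ψ a =
      ‖∑ k, ZMod.stdAddChar (a.2 * k) * (starRingEnd ℂ (ψ (k + a.1)) * ψ k)‖ ^ 2 := by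
  rw [dispExpectSq, dotProduct_disp_mulVec, norm_mul, norm_zpow, norm_tau, _root_.one_zpow,
    one_mul]
  simp only [Int.cast_natCast, ZMod.natCast_zmod_val]

theorem dispExpectSq_zero {ψ : ZMod d → ℂ} (hψ : ∑ k, ‖ψ k‖ ^ 2 = 1) :
    dispExpectSq d ψ 0 = 1 := by
  simp [dispExpectSq_eq, Complex.conj_mul', ← Complex.ofReal_pow, ← Complex.ofReal_sum, hψ]

theorem sum_dispExpectSq {ψ : ZMod d → ℂ} (hψ : ∑ k, ‖ψ k‖ ^ 2 = 1) :
    ∑ a, dispExpectSq d ψ a = d := by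
  have shift_invariant (k : ZMod d) : ∑ m, ‖ψ (k + m)‖ ^ 2 = 1 :=
    (Fintype.sum_equiv (Equiv.addLeft k) _ _ fun _ => rfl).trans hψ
  simp_rw [Fintype.sum_prod_type, dispExpectSq_eq,
    (ZMod.isPrimitive_stdAddChar d).sum_sq_norm_sum_mul, ZMod.card, norm_mul, Complex.norm_conj,
    mul_pow, ← Finset.mul_sum]
  rw [Finset.sum_comm]
  simp_rw [← Finset.sum_mul, shift_invariant, one_mul, hψ, mul_one]

theorem stabEntropy_proj (ψ : ZMod d → ℂ) {α : ℝ} (hα : α ≠ 1)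
    (hpos : 0 < ∑ a, dispExpectSq d ψ a ^ α) :
    stabEntropy d α (proj ψ) =
      1 / (1 - α) * Real.log ((∑ a, dispExpectSq d ψ a ^ α) / d) := by
  have hd : (0 : ℝ) < d := by exact_mod_cast Nat.pos_of_neZero d
  have hterm (a : ZMod d × ZMod d) :
      (1 / (d : ℝ) * ‖(Disp d (a.1.val, a.2.val) * proj ψ).trace‖ ^ 2) ^ α =
        dispExpectSq d ψ a ^ α / (d : ℝ) ^ α := by
    rw [trace_mul_proj, one_div_mul_eq_div, Real.div_rpow (by positivity) hd.le, dispExpectSq]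
  have h1α : 1 - α ≠ 0 := sub_ne_zero.2 hα.symm
  simp_rw [stabEntropy, hterm, ← Finset.sum_div, Real.log_div hpos.ne' hd.ne',
    Real.log_div hpos.ne' (Real.rpow_pos_of_pos hd α).ne', Real.log_rpow hd]
  field_simp
  ring

theorem sum_erase_zero_dispExpectSq_rpow_eq_iff {ψ : ZMod d → ℂ} (hψ : ∑ k, ‖ψ k‖ ^ 2 = 1)
    {α : ℝ} (hα : 1 < α) :
    ∑ a ∈ Finset.univ.erase 0, dispExpectSq d ψ a ^ α =
        ((d : ℝ) - 1) * ((d : ℝ) + 1) ^ (1 - α) ↔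
      ∀ a, a ≠ 0 → dispExpectSq d ψ a = 1 / ((d : ℝ) + 1) := by
  have hd : (0 : ℝ) < d + 1 := by positivity
  have hcard : ((Finset.univ.erase (0 : ZMod d × ZMod d)).card : ℝ) = (d - 1) * (d + 1) := by
    rw [Finset.card_erase_of_mem (Finset.mem_univ _), Finset.card_univ, Fintype.card_prod,
      ZMod.card, Nat.cast_sub (Nat.one_le_iff_ne_zero.2 (NeZero.ne (d * d)))]
    push_cast
    ring
  have hsum : ∑ a ∈ Finset.univ.erase 0, dispExpectSq d ψ a =
      (Finset.univ.erase (0 : ZMod d × ZMod d)).card * (1 / ((d : ℝ) + 1)) := by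
    rw [Finset.sum_erase_eq_sub (Finset.mem_univ _), sum_dispExpectSq hψ, dispExpectSq_zero hψ,
      hcard]
    field_simp
  have htarget : ((d : ℝ) - 1) * ((d : ℝ) + 1) ^ (1 - α) =
      (Finset.univ.erase (0 : ZMod d × ZMod d)).card * (1 / ((d : ℝ) + 1)) ^ α := by
    rw [hcard, Real.rpow_sub hd, Real.rpow_one, Real.div_rpow zero_le_one hd.le, Real.one_rpow]
    ring
  rw [htarget, sum_rpow_eq_card_mul_rpow_iff hα (fun a _ => dispExpectSq_nonneg ψ a) hsum]
  simp only [Finset.mem_erase, Finset.mem_univ, and_true]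

end

/-- A unit vector `ψ ∈ ℂ^d` achieves `M_α(ψ) = (1/(1-α)) log[(1 + (d-1)(d+1)^{1-α})/d]`
for some (equivalently every) `α ≥ 2` iff `|⟨ψ|D_a|ψ⟩|² = 1/(d+1)` for all `a ≠ 0`,
i.e. iff `ψ` is a fiducial vector of a Weyl–Heisenberg covariant SIC. -/
theorem stabEntropy_eq_max_iff_sic (d : ℕ) [NeZero d]
    (ψ : ZMod d → ℂ) (hψ : ∑ k, ‖ψ k‖ ^ 2 = 1) :
    ∀ α : ℝ, 2 ≤ α →
      (stabEntropy d α (proj ψ) =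
          (1 / (1 - α)) *
            Real.log ((1 + ((d : ℝ) - 1) * ((d : ℝ) + 1) ^ (1 - α)) / d) ↔
        ∀ a : ZMod d × ZMod d, a ≠ 0 →
          ‖star ψ ⬝ᵥ
            ((Disp d ((a.1.val : ℤ), (a.2.val : ℤ))).mulVec ψ)‖ ^ 2 = 1 / ((d : ℝ) + 1)) := by
  intro α hα
  have hα1 : 1 < α := by linarith
  have hd : (0 : ℝ) < d := by exact_mod_cast Nat.pos_of_neZero d
  have hd1 : (1 : ℝ) ≤ d := by exact_mod_cast NeZero.one_le
  set S := ∑ a ∈ Finset.univ.erase 0, dispExpectSq d ψ a ^ α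
  have hS : 0 ≤ S := Finset.sum_nonneg fun a _ => Real.rpow_nonneg (dispExpectSq_nonneg ψ a) α
  have hsplit : ∑ a, dispExpectSq d ψ a ^ α = 1 + S := by
    rw [← Finset.add_sum_erase _ _ (Finset.mem_univ 0), dispExpectSq_zero hψ, Real.one_rpow]
  rw [stabEntropy_proj ψ hα1.ne' (by linarith), hsplit,
    mul_right_inj' (one_div_ne_zero (sub_ne_zero.2 hα1.ne)),
    Real.log_injOn_pos.eq_iff (by simp only [Set.mem_Ioi]; positivity)
      (by simp only [Set.mem_Ioi]; positivity),
    div_left_inj' hd.ne', add_right_inj]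
  exact sum_erase_zero_dispExpectSq_rpow_eq_iff hψ hα1
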